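/- In the Cantor system (X,f) of the construction, for every x ∈ X with x ≠ p one has limsup_{k→∞} d(f^k(x), p) > 0, where p = (v_{0,0}, v_{1,0}, v_{2,0}, …). -/

import Mathlib

open Filter Topology
open scoped ENNReal

/-- `φ` is a graph homomorphism from `(V₁,E₁)` to `(V₂,E₂)`. -/
def IsGraphHom {V₁ V₂ : Type*} (E₁ : V₁ → V₁ → Prop) (E₂ : V₂ → V₂ → Prop)
    (φ : V₁ → V₂) : Prop :=
  ∀ u v, E₁ u v → E₂ (φ u) (φ v)

/-- `φ` is edge surjective. -/
def IsEdgeSurj {V₁ V₂ : Type*} (E₁ : V₁ → V₁ → Prop) (E₂ : V₂ → V₂ → Prop)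
    (φ : V₁ → V₂) : Prop :=
  ∀ u v, E₂ u v → ∃ u' v', E₁ u' v' ∧ φ u' = u ∧ φ v' = v

/-- `φ` is +directional. -/
def IsPlusDirectional {V₁ V₂ : Type*} (E₁ : V₁ → V₁ → Prop) (φ : V₁ → V₂) : Prop :=
  ∀ u v v', E₁ u v → E₁ u v' → φ v = φ v'

/-- `φ` is bidirectional. -/
def IsBidirectional {V₁ V₂ : Type*} (E₁ : V₁ → V₁ → Prop) (φ : V₁ → V₂) : Prop :=
  IsPlusDirectional E₁ φ ∧ ∀ u u' v, E₁ u v → E₁ u' v → φ u = φ u'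

/-- `φ` is a cover: a +directional edge-surjective graph homomorphism. -/
def IsCover {V₁ V₂ : Type*} (E₁ : V₁ → V₁ → Prop) (E₂ : V₂ → V₂ → Prop)
    (φ : V₁ → V₂) : Prop :=
  IsGraphHom E₁ E₂ φ ∧ IsPlusDirectional E₁ φ ∧ IsEdgeSurj E₁ E₂ φ

/-- every vertex has an incoming and an outgoing edge. -/
def IsSurjDigraph {V : Type*} (E : V → V → Prop) : Prop :=
  (∀ v, ∃ u, E u v) ∧ ∀ u, ∃ v, E u v

/-- the inverse limit `V_𝒢` of a sequence of graph maps. -/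
abbrev InvLim (V : ℕ → Type*) (φ : ∀ n, V (n + 1) → V n) : Type _ :=
  { x : ∀ n, V n // ∀ n, φ n (x (n + 1)) = x n }

/-- the relation `E_𝒢` on `V_𝒢`. -/
def ERel {V : ℕ → Type*} (E : ∀ n, V n → V n → Prop) (φ : ∀ n, V (n + 1) → V n)
    (x y : InvLim V φ) : Prop :=
  ∀ n, E n (x.1 n) (y.1 n)

/-- the product-of-discrete topology on the inverse limit, given explicitly. -/
def invLimTop (V : ℕ → Type*) (φ : ∀ n, V (n + 1) → V n) :
    TopologicalSpace (InvLim V φ) :=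
  @instTopologicalSpaceSubtype _ _ (@Pi.topologicalSpace ℕ V fun _ => ⊥)

/-- the distance function of an explicitly given metric space structure. -/
noncomputable def mdist {X : Type*} (m : MetricSpace X) (x y : X) : ℝ :=
  @dist X m.toDist x y

/-- the topology induced by an explicitly given metric space structure. -/
def mtop {X : Type*} (m : MetricSpace X) : TopologicalSpace X :=
  @UniformSpace.toTopologicalSpace X m.toUniformSpace

/-- the (half-open) list of vertices `vtx i 0, vtx i 1, …, vtx i (len-1)` of
the circuit `c_{n,i}`, the final vertex (equal to the initial one) omitted. -/
def circList {Vn : Type*} (vtx : ℕ → ℕ → Vn) (i len : ℕ) : List Vn :=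
  List.ofFn fun j : Fin len => vtx i (j : ℕ)

/-!
Suppose `f^[k] x → p` with `x ≠ p`. Then the level-`n` coordinate of the orbit is eventually
`v_{n,0}`, so there is a last time `Tₙ` at which the level-`n` coordinate is not `v_{n,0}`.
Projecting circuits of higher levels down to level `n` (the circuits `c_{m,i}`, `i > n`, collapse
to `v_{n,0}`, and `c_{m,i}` with `i ≤ n` runs through the second copy of `c_{m-1,n}` last), one
finds that at time `Tₙ` every level `m ≥ n` sits inside the circuit `c_{m,n}`, at least `m - n + 1`
steps before its end. Comparing the levels `n` and `n + 1` at a level `m` so high that the orbit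
stays in one circuit of `Gₘ` between `Tₙ` and `Tₙ₊₁` shows that this circuit is both `c_{m,n}`
and `c_{m,n+1}`.
-/

theorem List.eq_length_of_eq_append_replicate {α : Type*} {l A : List α} {a w b : α} {R j : ℕ}
    (hl : l = A ++ w :: List.replicate R a) (hw : w ≠ a) (hj : l[j]? = some b) (hb : b ≠ a)
    (hafter : ∀ j', j < j' → j' < l.length → l[j']? = some a) :
    j = A.length := by
  subst hl
  rcases lt_trichotomy j A.length with h | h | h
  · have := hafter A.length h (by simp)
    simp only [List.getElem?_append_right le_rfl, Nat.sub_self, List.getElem?_cons_zero,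
      Option.some.injEq] at this
    exact absurd this hw
  · exact h
  · rw [List.getElem?_append_right h.le, show j - A.length = (j - A.length - 1) + 1 by omega,
      List.getElem?_cons_succ, List.getElem?_replicate] at hj
    split_ifs at hj
    exact absurd (Option.some.inj hj).symm hb

theorem Nat.exists_last_not_of_eventually {P : ℕ → Prop} {t₀ : ℕ} (h₀ : ¬P t₀)
    (h : ∀ᶠ t in atTop, P t) : ∃ T, ¬P T ∧ ∀ t, T < t → P t := by
  classical
  obtain ⟨K, hK⟩ := eventually_atTop.1 h
  have ht₀ : t₀ ≤ K := by
    by_contra! hlt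
    exact h₀ (hK t₀ hlt.le)
  refine ⟨Nat.findGreatest (¬P ·) K, Nat.findGreatest_spec (P := (¬P ·)) ht₀ h₀, fun t ht => ?_⟩
  rcases le_total t K with htK | hKt
  · exact not_not.1 (Nat.findGreatest_is_greatest ht htK)
  · exact hK t hKt

theorem tendsto_of_limsup_mdist_le_zero {X ι : Type*} (m : MetricSpace X)
    [hX : @CompactSpace X (mtop m)] {l : Filter ι} {u : ι → X} {p : X}
    (h : limsup (fun k => mdist m (u k) p) l ≤ 0) : Tendsto u l (@nhds X (mtop m) p) := by
  let _ : MetricSpace X := m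
  have _ : CompactSpace X := hX
  have hbdd : IsBoundedUnder (· ≤ ·) l fun k => dist (u k) p := by
    obtain ⟨C, hC⟩ :=
      Metric.isBounded_iff.1 (Metric.isBounded_of_compactSpace (α := X) (s := Set.univ))
    exact isBoundedUnder_of ⟨C, fun k => hC (Set.mem_univ _) (Set.mem_univ _)⟩
  exact Metric.tendsto_nhds.2 fun ε hε => eventually_lt_of_limsup_lt (h.trans_lt hε) hbdd

section InverseLimit

variable {V : ℕ → Type*} {φ : ∀ n, V (n + 1) → V n}

instance [∀ n, TopologicalSpace (V n)] [∀ n, DiscreteTopology (V n)] [∀ n, Finite (V n)] :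
    CompactSpace (InvLim V φ) := by
  have hclosed : IsClosed {x : ∀ n, V n | ∀ n, φ n (x (n + 1)) = x n} := by
    simp only [Set.ofPred_forall]
    exact isClosed_iInter fun n =>
      isClosed_eq ((continuous_of_discreteTopology (f := φ n)).comp (continuous_apply _))
        (continuous_apply n)
  exact isCompact_iff_compactSpace.1 hclosed.isCompact

theorem InvLim.eventually_val_eq_of_tendsto [∀ n, TopologicalSpace (V n)]
    [∀ n, DiscreteTopology (V n)] {ι : Type*} {l : Filter ι} {u : ι → InvLim V φ}
    {p : InvLim V φ} (h : Tendsto u l (𝓝 p)) (n : ℕ) : ∀ᶠ t in l, (u t).1 n = p.1 n := by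
  have hn := (((continuous_apply n).comp continuous_subtype_val).tendsto p).comp h
  rw [nhds_discrete, tendsto_pure] at hn
  exact hn

def proj (φ : ∀ n, V (n + 1) → V n) (n : ℕ) : ∀ k, V (n + k) → V n
  | 0 => id
  | k + 1 => fun u => proj φ n k (φ (n + k) u)

theorem proj_val (x : InvLim V φ) (n : ℕ) : ∀ k, proj φ n k (x.1 (n + k)) = x.1 n
  | 0 => rfl
  | k + 1 => by
    change proj φ n k (φ (n + k) (x.1 (n + k + 1))) = x.1 n
    rw [x.2, proj_val x n k]

theorem map_proj_succ (n k : ℕ) (l : List (V (n + k + 1))) :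
    l.map (proj φ n (k + 1)) = (l.map (φ (n + k))).map (proj φ n k) := by
  rw [List.map_map]
  rfl

end InverseLimit

theorem circList_length {Vn : Type*} (vtx : ℕ → ℕ → Vn) (i L : ℕ) :
    (circList vtx i L).length = L := by
  simp [circList]

theorem getElem?_circList {Vn : Type*} (vtx : ℕ → ℕ → Vn) {i L j : ℕ} (hj : j < L) :
    (circList vtx i L)[j]? = some (vtx i j) := by
  simp [circList, hj]

theorem mem_circList {Vn : Type*} {vtx : ℕ → ℕ → Vn} {i L : ℕ} {u : Vn} :
    u ∈ circList vtx i L ↔ ∃ j < L, vtx i j = u := by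
  simp [circList, List.mem_ofFn, Fin.exists_iff]

theorem circList_succ {Vn : Type*} (vtx : ℕ → ℕ → Vn) (i L : ℕ) :
    circList vtx i (L + 1) = circList vtx i L ++ [vtx i L] := by
  simp only [circList, List.ofFn_succ_last]
  rfl

section Bouquet

variable {V : ℕ → Type*} {E : ∀ n, V n → V n → Prop} {φ : ∀ n, V (n + 1) → V n}
  {len : ℕ → ℕ → ℕ} {v0 : ∀ n, V n} {vtx : ∀ n, ℕ → ℕ → V n}

/-- `Gₙ` is the bouquet of the loop at `v0 n` and the circuits
`c_{n,i} = (vtx n i 0, …, vtx n i (len n i))`, `1 ≤ i ≤ n`. -/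
structure IsBouquet (E : ∀ n, V n → V n → Prop) (len : ℕ → ℕ → ℕ) (v0 : ∀ n, V n)
    (vtx : ∀ n, ℕ → ℕ → V n) : Prop where
  ends : ∀ n i, 1 ≤ i → i ≤ n → vtx n i 0 = v0 n ∧ vtx n i (len n i) = v0 n
  two_le_len : ∀ n i, 1 ≤ i → i ≤ n → 2 ≤ len n i
  vtx_ne : ∀ n i j, 1 ≤ i → i ≤ n → 0 < j → j < len n i → vtx n i j ≠ v0 n
  vtx_inj : ∀ n i j i' j', 1 ≤ i → i ≤ n → 1 ≤ i' → i' ≤ n →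
      0 < j → j < len n i → 0 < j' → j' < len n i' →
      vtx n i j = vtx n i' j' → i = i' ∧ j = j'
  edge_iff : ∀ n, 1 ≤ n → ∀ u v : V n, E n u v ↔
      (u = v0 n ∧ v = v0 n) ∨
      ∃ i j, 1 ≤ i ∧ i ≤ n ∧ j < len n i ∧ u = vtx n i j ∧ v = vtx n i (j + 1)

/-- `φ n` collapses `c_{n+1,n+1}` to `v0 n` and wraps `c_{n+1,i}`, `i ≤ n`, along
`e_{n,0} + 2c_{n,i} + ⋯ + 2c_{n,n} + e_{n,0}`. -/
structure IsBouquetCover (φ : ∀ n, V (n + 1) → V n) (len : ℕ → ℕ → ℕ) (v0 : ∀ n, V n)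
    (vtx : ∀ n, ℕ → ℕ → V n) : Prop where
  map_v0 : ∀ n, φ n (v0 (n + 1)) = v0 n
  map_top : ∀ n j, j ≤ len (n + 1) (n + 1) → φ n (vtx (n + 1) (n + 1) j) = v0 n
  map_circList : ∀ n i, 1 ≤ i → i ≤ n →
      List.map (φ n) (circList (vtx (n + 1)) i (len (n + 1) i)) =
        v0 n :: (((List.range' i (n + 1 - i)).flatMap fun k =>
          circList (vtx n) k (len n k) ++ circList (vtx n) k (len n k)) ++ [v0 n])

namespace IsBouquetCover

variable (hc : IsBouquetCover φ len v0 vtx)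
include hc

theorem proj_v0 (n : ℕ) : ∀ k, proj φ n k (v0 (n + k)) = v0 n
  | 0 => rfl
  | k + 1 => by
    change proj φ n k (φ (n + k) (v0 (n + k + 1))) = v0 n
    rw [hc.map_v0, proj_v0 n k]

theorem val_succ_ne_v0 (x : InvLim V φ) {n : ℕ} (h : x.1 n ≠ v0 n) : x.1 (n + 1) ≠ v0 (n + 1) :=
  fun h' => h (by rw [← x.2 n, h', hc.map_v0])

theorem map_mem_circList {N i : ℕ} (hi : 1 ≤ i) (hiN : i ≤ N) {u : V (N + 1)}
    (hu : u ∈ circList (vtx (N + 1)) i (len (N + 1) i)) :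
    φ N u = v0 N ∨ ∃ K, i ≤ K ∧ K ≤ N ∧ φ N u ∈ circList (vtx N) K (len N K) := by
  have h := List.mem_map_of_mem (f := φ N) hu
  rw [hc.map_circList N i hi hiN] at h
  simp only [List.mem_cons, List.mem_append, List.mem_flatMap, List.mem_range'_1, or_self,
    List.not_mem_nil, or_false] at h
  rcases h with h | ⟨K, hK, hmem⟩ | h
  · exact .inl h
  · exact .inr ⟨K, hK.1, by omega, hmem⟩
  · exact .inl h

theorem proj_eq_v0_of_lt (n : ℕ) : ∀ k i, n < i → i ≤ n + k →
    ∀ u ∈ circList (vtx (n + k)) i (len (n + k) i), proj φ n k u = v0 n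
  | 0, i, hni, hik, _, _ => by omega
  | k + 1, i, hni, hik, u, hu => by
    change proj φ n k (φ (n + k) u) = v0 n
    rcases (show i = n + k + 1 ∨ i ≤ n + k by omega) with rfl | hik'
    · obtain ⟨j, hj, rfl⟩ := mem_circList.1 hu
      change proj φ n k (φ (n + k) (vtx (n + k + 1) (n + k + 1) j)) = v0 n
      rw [hc.map_top (n + k) j hj.le, hc.proj_v0]
    · rcases hc.map_mem_circList (by omega) hik' hu with h | ⟨K, hiK, hK, hmem⟩
      · rw [h, hc.proj_v0]
      · exact proj_eq_v0_of_lt n k K (by omega) hK _ hmem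

theorem exists_map_circList_eq_append {n i : ℕ} (hi : 1 ≤ i) (hin : i ≤ n) (k : ℕ) :
    ∃ L M, (circList (vtx (n + k + 1)) i (len (n + k + 1) i)).map (φ (n + k)) =
        L ++ circList (vtx (n + k)) n (len (n + k) n) ++ M ∧ M ≠ [] ∧
      M.map (proj φ n k) = List.replicate M.length (v0 n) := by
  have hr :
      List.range' i (n + k + 1 - i) = List.range' i (n - i) ++ n :: List.range' (n + 1) k := by
    rw [show n + k + 1 - i = (n - i) + (k + 1) by omega, ← List.range'_append,
      show i + 1 * (n - i) = n by omega, List.range'_succ]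
  refine ⟨v0 (n + k) :: ((List.range' i (n - i)).flatMap (fun K =>
      circList (vtx (n + k)) K (len (n + k) K) ++ circList (vtx (n + k)) K (len (n + k) K)) ++
      circList (vtx (n + k)) n (len (n + k) n)), (List.range' (n + 1) k).flatMap (fun K =>
      circList (vtx (n + k)) K (len (n + k) K) ++ circList (vtx (n + k)) K (len (n + k) K))
      ++ [v0 (n + k)], ?_, by simp, ?_⟩
  · rw [hc.map_circList _ i hi (by omega), hr, List.flatMap_append, List.flatMap_cons]
    simp only [List.append_assoc, List.cons_append]
  · refine List.eq_replicate_iff.2 ⟨List.length_map _, fun b hb => ?_⟩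
    simp only [List.map_append, List.mem_append, List.mem_map, List.mem_flatMap,
      List.mem_range'_1, List.map_cons, List.map_nil, List.mem_singleton] at hb
    rcases hb with ⟨u, ⟨K, hK, hu | hu⟩, rfl⟩ | rfl
    · exact hc.proj_eq_v0_of_lt n k K (by omega) (by omega) u hu
    · exact hc.proj_eq_v0_of_lt n k K (by omega) (by omega) u hu
    · exact hc.proj_v0 n k

theorem exists_map_proj_circList_eq {n : ℕ} (hn : 1 ≤ n) (hlen : 0 < len n n) :
    ∀ k, ∃ L R, k ≤ R ∧ (circList (vtx (n + k)) n (len (n + k) n)).map (proj φ n k) =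
      L ++ vtx n n (len n n - 1) :: List.replicate R (v0 n)
  | 0 => ⟨circList (vtx n) n (len n n - 1), 0, le_rfl, by
      change (circList (vtx n) n (len n n)).map id = _
      rw [List.map_id, List.replicate_zero, ← circList_succ, Nat.sub_add_cancel hlen]⟩
  | k + 1 => by
    obtain ⟨L, R, hkR, hT⟩ := exists_map_proj_circList_eq hn hlen k
    obtain ⟨L₁, M, hW, hM, hMproj⟩ := hc.exists_map_circList_eq_append hn le_rfl k
    refine ⟨L₁.map (proj φ n k) ++ L, R + M.length,
      by have := List.length_pos_of_ne_nil hM; omega, ?_⟩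
    change (circList (vtx (n + k + 1)) n (len (n + k + 1) n)).map (proj φ n (k + 1)) = _
    rw [map_proj_succ, hW, List.map_append, List.map_append, hT, hMproj, List.replicate_add]
    simp

theorem exists_map_eq_vtx_of_last {n i k j : ℕ} (hi : 1 ≤ i) (hin : i ≤ n) (hlen : 0 < len n n)
    (hw : vtx n n (len n n - 1) ≠ v0 n) (hj : j < len (n + k + 1) i)
    (hne : proj φ n (k + 1) (vtx (n + k + 1) i j) ≠ v0 n)
    (hafter : ∀ j', j < j' → j' < len (n + k + 1) i →
      proj φ n (k + 1) (vtx (n + k + 1) i j') = v0 n) :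
    ∃ j₀, φ (n + k) (vtx (n + k + 1) i j) = vtx (n + k) n j₀ ∧ j₀ + k < len (n + k) n := by
  obtain ⟨L, R, hkR, hT⟩ := hc.exists_map_proj_circList_eq (by omega) hlen k
  obtain ⟨L₁, M, hW, -, hMproj⟩ := hc.exists_map_circList_eq_append hi hin k
  have hlenL : L.length + 1 + R = len (n + k) n := by
    simpa [circList_length, add_assoc, add_comm, add_left_comm] using (congrArg List.length hT).symm
  set c := circList (vtx (n + k + 1)) i (len (n + k + 1) i)
  have hl : c.map (proj φ n (k + 1)) = (L₁.map (proj φ n k) ++ L) ++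
      vtx n n (len n n - 1) :: List.replicate (R + M.length) (v0 n) := by
    rw [map_proj_succ, hW, List.map_append, List.map_append, hT, hMproj, List.replicate_add]
    simp
  have hjL : j = (L₁.map (proj φ n k) ++ L).length :=
    List.eq_length_of_eq_append_replicate hl hw
      (by simp [c, getElem?_circList _ hj]) hne
      (fun j' h₁ h₂ => by
        simp only [c, List.length_map, circList_length] at h₂
        simp [c, getElem?_circList _ h₂, hafter j' h₁ h₂])
  refine ⟨L.length, ?_, by omega⟩
  have hφj : (c.map (φ (n + k)))[j]? = some (φ (n + k) (vtx (n + k + 1) i j)) := by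
    simp [c, getElem?_circList _ hj]
  rw [hW, hjL, List.append_assoc, List.length_append, List.length_map,
    List.getElem?_append_right (by omega),
    show L₁.length + L.length - L₁.length = L.length by omega,
    List.getElem?_append_left (by rw [circList_length]; omega),
    getElem?_circList _ (by omega)] at hφj
  rw [hjL, List.length_append, List.length_map]
  exact (Option.some.inj hφj).symm

end IsBouquetCover

end Bouquet
section Orbit

variable {V : ℕ → Type*} {E : ∀ n, V n → V n → Prop} {φ : ∀ n, V (n + 1) → V n}
  {len : ℕ → ℕ → ℕ} {v0 : ∀ n, V n} {vtx : ∀ n, ℕ → ℕ → V n}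

namespace IsBouquet

variable (hb : IsBouquet E len v0 vtx)
include hb

theorem eq_of_edge_vtx {m i j : ℕ} (hi : 1 ≤ i) (him : i ≤ m) (hj₀ : 0 < j) (hj : j < len m i)
    {v : V m} (h : E m (vtx m i j) v) : v = vtx m i (j + 1) := by
  rcases (hb.edge_iff m (by omega) _ _).1 h with ⟨hu, -⟩ | ⟨i', j', hi', hi'm, hj', hu, hv⟩
  · exact absurd hu (hb.vtx_ne m i j hi him hj₀ hj)
  · obtain rfl | hj'₀ := Nat.eq_zero_or_pos j'
    · rw [(hb.ends m i' hi' hi'm).1] at hu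
      exact absurd hu (hb.vtx_ne m i j hi him hj₀ hj)
    · obtain ⟨rfl, rfl⟩ := hb.vtx_inj m i j i' j' hi him hi' hi'm hj₀ hj hj'₀ hj' hu
      exact hv

theorem exists_eq_vtx_of_edge {m : ℕ} (hm : 1 ≤ m) {u v : V m} (h : E m u v) (hu : u ≠ v0 m) :
    ∃ i j, 1 ≤ i ∧ i ≤ m ∧ 0 < j ∧ j < len m i ∧ u = vtx m i j := by
  rcases (hb.edge_iff m hm u v).1 h with ⟨hu', -⟩ | ⟨i, j, hi, him, hj, rfl, -⟩
  · exact absurd hu' hu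
  · refine ⟨i, j, hi, him, Nat.pos_of_ne_zero fun hj₀ => hu ?_, hj, rfl⟩
    rw [hj₀, (hb.ends m i hi him).1]

variable {y : ℕ → InvLim V φ} (hy : ∀ t m, E m ((y t).1 m) ((y (t + 1)).1 m))
include hy

theorem orbit_eq_vtx_add {t m i j : ℕ} (hi : 1 ≤ i) (him : i ≤ m) (hj₀ : 0 < j)
    (ht : (y t).1 m = vtx m i j) : ∀ s, j + s ≤ len m i → (y (t + s)).1 m = vtx m i (j + s)
  | 0, _ => ht
  | s + 1, hs => by
    have h := hy (t + s) m
    rw [orbit_eq_vtx_add hi him hj₀ ht s (by omega)] at h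
    exact hb.eq_of_edge_vtx hi him (show 0 < j + s by omega) (show j + s < len m i by omega) h

theorem orbit_eq_vtx_of_last (hc : IsBouquetCover φ len v0 vtx) {n T : ℕ} (hn : 1 ≤ n)
    (hT : (y T).1 n ≠ v0 n) (hafter : ∀ t, T < t → (y t).1 n = v0 n) {m : ℕ} (hnm : n ≤ m) :
    ∃ j, (y T).1 m = vtx m n j ∧ 0 < j ∧ j + (m - n) < len m n := by
  obtain ⟨k, rfl⟩ := Nat.exists_eq_add_of_le hnm
  have hne : ∀ k, (y T).1 (n + k) ≠ v0 (n + k) := fun k h =>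
    hT (by rw [← proj_val (y T) n k, h, hc.proj_v0])
  obtain ⟨i, j, hi, him, hj₀, hj, hyT⟩ :=
    hb.exists_eq_vtx_of_edge (m := n + k + 1) (by omega) (hy T _) (hne (k + 1))
  have hproj : ∀ j', j ≤ j' → j' ≤ len (n + k + 1) i →
      proj φ n (k + 1) (vtx (n + k + 1) i j') = (y (T + (j' - j))).1 n := by
    intro j' h₁ h₂
    have h := hb.orbit_eq_vtx_add hy hi him hj₀ hyT (j' - j) (by omega)
    rw [Nat.add_sub_cancel' h₁] at h
    rw [← h]
    exact proj_val _ n (k + 1)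
  have hin : i ≤ n := by
    by_contra! h
    have h₀ := hc.proj_eq_v0_of_lt n (k + 1) i h him (vtx (n + k + 1) i j)
      (mem_circList.2 ⟨j, hj, rfl⟩)
    rw [hproj j le_rfl hj.le, Nat.sub_self, Nat.add_zero] at h₀
    exact hT h₀
  have hlen := hb.two_le_len n n hn le_rfl
  obtain ⟨j₀, hφ, hj₀k⟩ := hc.exists_map_eq_vtx_of_last hi hin (by omega)
    (hb.vtx_ne n n _ hn le_rfl (by omega) (by omega)) hj
    (by simpa [hproj j le_rfl hj.le] using hT)
    (fun j' h₁ h₂ => by rw [hproj j' h₁.le h₂.le]; exact hafter _ (by omega))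
  have hyk : (y T).1 (n + k) = vtx (n + k) n j₀ := by rw [← (y T).2 (n + k), hyT, hφ]
  refine ⟨j₀, hyk, Nat.pos_of_ne_zero fun h₀ => hne k ?_, by omega⟩
  rw [hyk, h₀, (hb.ends _ n hn (by omega)).1]

theorem orbit_val_eq_v0_of_eventually (hc : IsBouquetCover φ len v0 vtx) {n : ℕ} (hn : 1 ≤ n)
    (hev : ∀ᶠ t in atTop, (y t).1 (n + 1) = v0 (n + 1)) (t₀ : ℕ) : (y t₀).1 n = v0 n := by
  by_contra h₀
  have hev' : ∀ᶠ t in atTop, (y t).1 n = v0 n :=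
    hev.mono fun t ht => by rw [← (y t).2 n, ht, hc.map_v0]
  obtain ⟨T, hT, hTafter⟩ := Nat.exists_last_not_of_eventually h₀ hev'
  obtain ⟨T', hT', hT'after⟩ := Nat.exists_last_not_of_eventually (hc.val_succ_ne_v0 _ h₀) hev
  have hTT' : T ≤ T' := by
    by_contra! h
    exact hc.val_succ_ne_v0 _ hT (hT'after T h)
  obtain ⟨j, hj, hj₀, hjlen⟩ :=
    hb.orbit_eq_vtx_of_last hy hc hn hT hTafter (m := n + 1 + (T' - T)) (by omega)
  obtain ⟨j', hj', hj'₀, hj'len⟩ :=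
    hb.orbit_eq_vtx_of_last hy hc (by omega) hT' hT'after (m := n + 1 + (T' - T)) (by omega)
  have h := hb.orbit_eq_vtx_add hy hn (by omega) hj₀ hj (T' - T) (by omega)
  rw [Nat.add_sub_cancel' hTT', hj'] at h
  obtain ⟨hcontra, -⟩ := hb.vtx_inj (n + 1 + (T' - T)) n (j + (T' - T)) (n + 1) j'
    hn (by omega) (by omega) (by omega) (by omega) (by omega) hj'₀ (by omega) h.symm
  omega

end IsBouquet

end Orbit

theorem stmt13_general
    (V : ℕ → Type) [∀ n, TopologicalSpace (V n)] [∀ n, DiscreteTopology (V n)]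
    [∀ n, Fintype (V n)]
    (E : ∀ n, V n → V n → Prop) (φ : ∀ n, V (n + 1) → V n)
    (len : ℕ → ℕ → ℕ) (v0 : ∀ n, V n) (vtx : ∀ n, ℕ → ℕ → V n)
    (hends : ∀ n i, 1 ≤ i → i ≤ n → vtx n i 0 = v0 n ∧ vtx n i (len n i) = v0 n)
    (hlen2 : ∀ n i, 1 ≤ i → i ≤ n → 2 ≤ len n i)
    (hne : ∀ n i j, 1 ≤ i → i ≤ n → 0 < j → j < len n i → vtx n i j ≠ v0 n)
    (hinj : ∀ n i j i' j', 1 ≤ i → i ≤ n → 1 ≤ i' → i' ≤ n →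
      0 < j → j < len n i → 0 < j' → j' < len n i' →
      vtx n i j = vtx n i' j' → i = i' ∧ j = j')
    (hE : ∀ n, 1 ≤ n → ∀ u v : V n, E n u v ↔
      (u = v0 n ∧ v = v0 n) ∨
      ∃ i j, 1 ≤ i ∧ i ≤ n ∧ j < len n i ∧ u = vtx n i j ∧ v = vtx n i (j + 1))
    (hphi0 : ∀ n, φ n (v0 (n + 1)) = v0 n)
    (hphitop : ∀ n j, j ≤ len (n + 1) (n + 1) → φ n (vtx (n + 1) (n + 1) j) = v0 n)
    (hphiwalk : ∀ n i, 1 ≤ i → i ≤ n →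
      List.map (φ n) (circList (vtx (n + 1)) i (len (n + 1) i)) =
        v0 n :: (((List.range' i (n + 1 - i)).flatMap fun k =>
          circList (vtx n) k (len n k) ++ circList (vtx n) k (len n k)) ++ [v0 n]))
    (f : InvLim V φ ≃ₜ InvLim V φ)
    (hf : ∀ x y : InvLim V φ, ERel E φ x y ↔ f x = y)
    (m : MetricSpace (InvLim V φ))
    (hm : mtop m = (inferInstance : TopologicalSpace (InvLim V φ)))
    (p : InvLim V φ) (hp : ∀ n, p.1 n = v0 n) :
    ∀ x : InvLim V φ, x ≠ p →
      0 < Filter.limsup (fun k => mdist m ((⇑f)^[k] x) p) Filter.atTop := by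
  have hb : IsBouquet E len v0 vtx := ⟨hends, hlen2, hne, hinj, hE⟩
  have hc : IsBouquetCover φ len v0 vtx := ⟨hphi0, hphitop, hphiwalk⟩
  intro x hxp
  set y : ℕ → InvLim V φ := fun t => (⇑f)^[t] x
  have hy : ∀ t m, E m ((y t).1 m) ((y (t + 1)).1 m) := fun t =>
    (hf _ _).2 (Function.iterate_succ_apply' f t x).symm
  by_contra! hlim
  have hev : ∀ n, ∀ᶠ t in atTop, (y t).1 n = v0 n := by
    have : @CompactSpace _ (mtop m) := hm ▸ inferInstance
    have h := tendsto_of_limsup_mdist_le_zero m hlim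
    rw [hm] at h
    exact fun n => hp n ▸ InvLim.eventually_val_eq_of_tendsto h n
  obtain ⟨n, hxn⟩ : ∃ n, x.1 n ≠ v0 n := by
    by_contra! h
    exact hxp (Subtype.ext (funext fun n => (h n).trans (hp n).symm))
  exact hc.val_succ_ne_v0 x hxn (hb.orbit_val_eq_v0_of_eventually hy hc (by omega) (hev (n + 2)) 0)

theorem stmt13
    (V : ℕ → Type) [∀ n, TopologicalSpace (V n)] [∀ n, DiscreteTopology (V n)]
    [∀ n, Fintype (V n)]
    (E : ∀ n, V n → V n → Prop) (φ : ∀ n, V (n + 1) → V n)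
    (len : ℕ → ℕ → ℕ) (v0 : ∀ n, V n) (vtx : ∀ n, ℕ → ℕ → V n)
    (hV0 : ∀ u : V 0, u = v0 0)
    (hE0 : ∀ u v : V 0, E 0 u v ↔ u = v0 0 ∧ v = v0 0)
    (hends : ∀ n i, 1 ≤ i → i ≤ n → vtx n i 0 = v0 n ∧ vtx n i (len n i) = v0 n)
    (hlen2 : ∀ n i, 1 ≤ i → i ≤ n → 2 ≤ len n i)
    (hrec : ∀ n i, 1 ≤ i → i ≤ n →
      len (n + 1) i = 2 + 2 * ∑ j ∈ Finset.Icc i n, len n j)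
    (hne : ∀ n i j, 1 ≤ i → i ≤ n → 0 < j → j < len n i → vtx n i j ≠ v0 n)
    (hinj : ∀ n i j i' j', 1 ≤ i → i ≤ n → 1 ≤ i' → i' ≤ n →
      0 < j → j < len n i → 0 < j' → j' < len n i' →
      vtx n i j = vtx n i' j' → i = i' ∧ j = j')
    (hall : ∀ n, 1 ≤ n → ∀ u : V n,
      u = v0 n ∨ ∃ i j, 1 ≤ i ∧ i ≤ n ∧ 0 < j ∧ j < len n i ∧ u = vtx n i j)
    (hE : ∀ n, 1 ≤ n → ∀ u v : V n, E n u v ↔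
      (u = v0 n ∧ v = v0 n) ∨
      ∃ i j, 1 ≤ i ∧ i ≤ n ∧ j < len n i ∧ u = vtx n i j ∧ v = vtx n i (j + 1))
    (hphi0 : ∀ n, φ n (v0 (n + 1)) = v0 n)
    (hphitop : ∀ n j, j ≤ len (n + 1) (n + 1) → φ n (vtx (n + 1) (n + 1) j) = v0 n)
    (hphiwalk : ∀ n i, 1 ≤ i → i ≤ n →
      List.map (φ n) (circList (vtx (n + 1)) i (len (n + 1) i)) =
        v0 n :: (((List.range' i (n + 1 - i)).flatMap fun k =>
          circList (vtx n) k (len n k) ++ circList (vtx n) k (len n k)) ++ [v0 n]))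
    (hcov : ∀ n, IsCover (E (n + 1)) (E n) (φ n))
    (f : InvLim V φ ≃ₜ InvLim V φ)
    (hf : ∀ x y : InvLim V φ, ERel E φ x y ↔ f x = y)
    (m : MetricSpace (InvLim V φ))
    (hm : mtop m = (inferInstance : TopologicalSpace (InvLim V φ)))
    (p : InvLim V φ) (hp : ∀ n, p.1 n = v0 n) :
    ∀ x : InvLim V φ, x ≠ p →
      0 < Filter.limsup (fun k => mdist m ((⇑f)^[k] x) p) Filter.atTop :=
  stmt13_general V E φ len v0 vtx hends hlen2 hne hinj hE hphi0 hphitop hphiwalk f hf m hm p hp
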